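/- For all g ≥ 0 and q ≥ 1, the number of root-connected acyclic orientations of G_q(g) equals ((q+1)!)^{E(g,q)}, where E(g,q) = (2/(q(q+3))) · ((q+1)(q+2)/2)^{g+1} − 2/(q(q+3)). -/

import Mathlib

/-- Edge corona product `G ⊛ K_q`: keep `G`, and for each edge of `G` add a fresh
copy of the complete graph on `q` vertices, joining all its vertices to both
endpoints of the edge. -/
def edgeCorona {V : Type} (G : SimpleGraph V) (q : ℕ) :
    SimpleGraph (V ⊕ (G.edgeSet × Fin q)) where
  Adj := fun x y => match x, y with
    | Sum.inl u, Sum.inl v => G.Adj u v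
    | Sum.inl u, Sum.inr p => u ∈ (p.1 : Sym2 V)
    | Sum.inr p, Sum.inl v => v ∈ (p.1 : Sym2 V)
    | Sum.inr p, Sum.inr r => p.1 = r.1 ∧ p.2 ≠ r.2
  symm := by
    constructor
    rintro (u | p) (v | r) h
    · exact G.adj_symm h
    · exact h
    · exact h
    · exact ⟨h.1.symm, h.2.symm⟩
  loopless := by
    constructor
    rintro (u | p) h
    · exact G.irrefl h
    · exact h.2 rfl

/-- The simplicial network `G_q(g)` together with its vertex type:
`G_q(0) = K_{q+2}` and `G_q(g+1) = G_q(g) ⊛ K_q`. -/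
def Gaux (q : ℕ) : ℕ → Σ V : Type, SimpleGraph V
  | 0 => ⟨Fin (q + 2), ⊤⟩
  | g + 1 => ⟨_, edgeCorona (Gaux q g).2 q⟩

abbrev GVert (q g : ℕ) : Type := (Gaux q g).1

abbrev Gnet (q g : ℕ) : SimpleGraph (GVert q g) := (Gaux q g).2

/-- The `q+2` hub nodes of `G_q(g)`: the vertices present from iteration `0`. -/
def hub (q : ℕ) : (g : ℕ) → Fin (q + 2) → GVert q g
  | 0 => id
  | g + 1 => fun k => Sum.inl (hub q g k)

/-- The exponent `E(g,q) = (2/(q(q+3))) · ((q+1)(q+2)/2)^{g+1} − 2/(q(q+3))`,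
a natural number (the division is exact). -/
def expE (q g : ℕ) : ℕ :=
  (2 * (((q + 1) * (q + 2) / 2) ^ (g + 1) - 1)) / (q * (q + 3))

/-- An acyclic orientation of a graph `G`: a choice of direction for every edge
such that the resulting directed graph has no directed cycle. -/
structure AcyclicOrientation {V : Type} (G : SimpleGraph V) where
  /-- the chosen direction relation -/
  dir : V → V → Prop
  dir_adj : ∀ u v, dir u v → G.Adj u v
  adj_dir : ∀ u v, G.Adj u v → dir u v ∨ dir v u
  asymm : ∀ u v, dir u v → ¬ dir v u
  acyclic : Irreflexive (Relation.TransGen dir)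

/-!
A root-connected acyclic orientation of `G ⊛ K_q` restricts to one of `G`, which orients each
edge `e` from a tail to a head. The `q` new vertices over `e` are adjacent only to each other and
to the two ends of `e`, so they reach the root through the tail or the head; acyclicity then
forces every new vertex to point to the head. What remains of the clique over `e` is an acyclic
tournament on the tail and the new vertices, i.e. one of `(q+1)!` rankings, and conversely any
choice of rankings extends an orientation of `G` acyclically and root-connectedly. So each corona
step multiplies the count by `(q+1)! ^ |E|`, while `|E|` is multiplied by `m = (q+1)(q+2)/2`.
Starting from the `(q+1)!` orientations of `K_{q+2}` having the root as sink, the exponent is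
`∑_{k ≤ g} m^k = E(g,q)`.
-/

open Relation
open scoped Nat

theorem Relation.TransGen.map_of_isTrans {α β : Type*} {r : α → α → Prop}
    {s : β → β → Prop} [IsTrans β s] (f : α → β) (h : ∀ a b, r a b → s (f a) (f b))
    {a b : α} (hab : TransGen r a b) : s (f a) (f b) := by
  simpa only [transGen_eq_self] using hab.lift f h

theorem not_transGen_self_of_map {α β : Type*} {r : α → α → Prop} {s : β → β → Prop}
    [IsTrans β s] [Std.Irrefl s] (f : α → β) (h : ∀ a b, r a b → s (f a) (f b)) (a : α) :
    ¬ TransGen r a a := fun ha => irrefl (r := s) (f a) (ha.map_of_isTrans f h)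

theorem Equiv.eq_of_lt_iff_lt {α : Type*} {n : ℕ} {f g : α ≃ Fin n}
    (h : ∀ a b, f a < f b ↔ g a < g b) : f = g := by
  have hmono : StrictMono (f.symm.trans g) := fun x y hxy => by
    simpa [← h] using hxy
  have : hmono.orderIsoOfSurjective _ (f.symm.trans g).surjective = OrderIso.refl _ :=
    Subsingleton.elim _ _
  ext a
  simpa using (congrArg (fun e : Fin n ≃o Fin n => (e (f a) : ℕ)) this).symm

namespace AcyclicOrientation

variable {V W : Type} {G : SimpleGraph V} {H : SimpleGraph W}

def IsRootConnected (o : AcyclicOrientation G) (r : V) : Prop :=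
  ∀ v, v ≠ r → TransGen o.dir v r

theorem isRootConnected_iff (o : AcyclicOrientation G) (r : V) :
    o.IsRootConnected r ↔ ∀ v, ReflTransGen o.dir v r := by
  refine forall_congr' fun v => ?_
  rw [reflTransGen_iff_eq_or_transGen]
  by_cases h : v = r
  · simp [h]
  · simp [h, Ne.symm h]

theorem ext_of_dir_imp {o o' : AcyclicOrientation G} (h : ∀ a b, o.dir a b → o'.dir a b) :
    o = o' := by
  have : o.dir = o'.dir := by
    funext a b
    refine propext ⟨h a b, fun h' => ?_⟩
    exact (o.adj_dir a b (o'.dir_adj a b h')).resolve_right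
      fun hba => o'.asymm a b h' (h b a hba)
  cases o; cases o'; cases this; rfl

instance isStrictOrder_transGen_dir (o : AcyclicOrientation G) :
    IsStrictOrder V (TransGen o.dir) where
  irrefl := o.acyclic

def comap (f : H ↪g G) (o : AcyclicOrientation G) : AcyclicOrientation H where
  dir a b := o.dir (f a) (f b)
  dir_adj _ _ h := f.map_adj_iff.mp (o.dir_adj _ _ h)
  adj_dir _ _ h := o.adj_dir _ _ (f.map_adj_iff.mpr h)
  asymm _ _ := o.asymm _ _
  acyclic := not_transGen_self_of_map (s := TransGen o.dir) f fun _ _ => .single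

section Edge

variable (o : AcyclicOrientation G)

theorem exists_dir_of_edge (e : G.edgeSet) : ∃ u v, (e : Sym2 V) = s(u, v) ∧ o.dir u v := by
  obtain ⟨e, he⟩ := e
  induction e using Sym2.ind with
  | h u v =>
    rcases o.adj_dir u v he with h | h
    · exact ⟨u, v, rfl, h⟩
    · exact ⟨v, u, Sym2.eq_swap, h⟩

noncomputable def tail (e : G.edgeSet) : V := (o.exists_dir_of_edge e).choose

noncomputable def head (e : G.edgeSet) : V := (o.exists_dir_of_edge e).choose_spec.choose

theorem edge_eq (e : G.edgeSet) : (e : Sym2 V) = s(o.tail e, o.head e) :=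
  (o.exists_dir_of_edge e).choose_spec.choose_spec.1

theorem dir_tail_head (e : G.edgeSet) : o.dir (o.tail e) (o.head e) :=
  (o.exists_dir_of_edge e).choose_spec.choose_spec.2

theorem tail_ne_head (e : G.edgeSet) : o.tail e ≠ o.head e :=
  (o.dir_adj _ _ (o.dir_tail_head e)).ne

theorem mem_edge_iff (e : G.edgeSet) {x : V} :
    x ∈ (e : Sym2 V) ↔ x = o.tail e ∨ x = o.head e := by
  rw [o.edge_eq e, Sym2.mem_iff]

theorem tail_mem (e : G.edgeSet) : o.tail e ∈ (e : Sym2 V) := (o.mem_edge_iff e).2 (.inl rfl)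

theorem head_mem (e : G.edgeSet) : o.head e ∈ (e : Sym2 V) := (o.mem_edge_iff e).2 (.inr rfl)

end Edge

section Complete

variable {α : Type} {n : ℕ}

def ofRank (f : α ≃ Fin n) : AcyclicOrientation (⊤ : SimpleGraph α) where
  dir a b := f b < f a
  dir_adj a b h := by
    rw [SimpleGraph.top_adj]
    rintro rfl
    exact lt_irrefl _ h
  adj_dir _ _ h := lt_or_gt_of_ne (f.injective.ne h).symm
  asymm _ _ := lt_asymm
  acyclic := not_transGen_self_of_map (s := (· > ·)) f fun _ _ => id

theorem dir_trans_of_top (o : AcyclicOrientation (⊤ : SimpleGraph α)) {a b c : α}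
    (hab : o.dir a b) (hbc : o.dir b c) : o.dir a c := by
  have hcycle : ¬ o.dir c a := fun hca => o.acyclic a (.tail (.tail (.single hab) hbc) hca)
  have hac : a ≠ c := by
    rintro rfl
    exact o.asymm a b hab hbc
  exact (o.adj_dir a c hac).resolve_right hcycle

theorem exists_rank [Fintype α] (o : AcyclicOrientation (⊤ : SimpleGraph α))
    (hn : Fintype.card α = n) : ∃ f : α ≃ Fin n, ∀ a b, o.dir a b ↔ f b < f a := by
  classical
  have : IsStrictTotalOrder α (flip o.dir) :=
    { trichotomous a b hab hba := by_contra fun hne => (o.adj_dir a b hne).elim hba hab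
      irrefl a h := o.asymm a a h h
      trans _ _ _ hab hbc := o.dir_trans_of_top hbc hab }
  let : LinearOrder α := linearOrderOfSTO (flip o.dir)
  exact ⟨(monoEquivOfFin α hn).symm.toEquiv, fun a b =>
    (monoEquivOfFin α hn).symm.lt_iff_lt.symm⟩

theorem ofRank_injective : Function.Injective (ofRank : (α ≃ Fin n) → _) := fun f g h =>
  Equiv.eq_of_lt_iff_lt fun a b => by
    simpa only [ofRank] using iff_of_eq (congrArg (fun o => o.dir b a) h)

theorem isRootConnected_ofRank_iff (f : α ≃ Fin (n + 1)) (r : α) :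
    (ofRank f).IsRootConnected r ↔ f r = 0 := by
  refine ⟨fun h => by_contra fun hr => ?_, fun hr v hv => .single ?_⟩
  · have hv : f.symm 0 ≠ r := fun hv => hr (by rw [← hv, f.apply_symm_apply])
    have hlt : f r < f (f.symm 0) :=
      (h _ hv).map_of_isTrans (s := fun x y => y < x) f fun _ _ => id
    simp at hlt
  · show f r < f v
    rw [hr, Fin.pos_iff_ne_zero]
    exact hr ▸ f.injective.ne hv

theorem card_isRootConnected_top [Fintype α] (r : α) (hn : Fintype.card α = n + 1) :
    Nat.card {o : AcyclicOrientation (⊤ : SimpleGraph α) // o.IsRootConnected r} = n ! := by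
  classical
  have hbij : Function.Bijective fun f : {f : α ≃ Fin (n + 1) // f r = 0} =>
      (⟨ofRank f.1, (isRootConnected_ofRank_iff f.1 r).2 f.2⟩ :
        {o : AcyclicOrientation (⊤ : SimpleGraph α) // o.IsRootConnected r}) := by
    refine ⟨fun f g h => Subtype.ext (ofRank_injective (congrArg Subtype.val h)), ?_⟩
    rintro ⟨o, ho⟩
    obtain ⟨f, hf⟩ := o.exists_rank hn
    have hof : ofRank f = o := ext_of_dir_imp fun a b => (hf a b).2
    exact ⟨⟨f, (isRootConnected_ofRank_iff f r).1 (hof ▸ ho)⟩, Subtype.ext hof⟩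
  have e : {f : α ≃ Fin (n + 1) // f r = 0} ≃
      ({b // b ≠ r} ≃ {y : Fin (n + 1) // y ≠ 0}) :=
    (((Equiv.optionSubtypeNe r).symm.equivCongr (Equiv.refl _)).subtypeEquiv
      fun f => by simp).trans (Equiv.optionSubtype 0)
  rw [← Nat.card_eq_of_bijective _ hbij, Nat.card_congr e, Nat.card_eq_fintype_card,
    Fintype.card_equiv (Fintype.equivOfCardEq (by simp [hn]))]
  simp [hn]

end Complete

end AcyclicOrientation

theorem SimpleGraph.sum_card_neighborSet {W : Type} [Fintype W] (H : SimpleGraph W) :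
    ∑ v, Nat.card (H.neighborSet v) = 2 * Nat.card H.edgeSet := by
  classical
  simp only [Nat.card_eq_fintype_card, H.card_neighborSet_eq_degree,
    H.sum_degrees_eq_twice_card_edges, H.edgeFinset_card]

theorem SimpleGraph.card_mem_edge {V : Type} {G : SimpleGraph V} (e : G.edgeSet) :
    Nat.card {v // v ∈ (e : Sym2 V)} = 2 := by
  classical
  rw [← Sym2.card_toFinset_of_not_isDiag _ (G.not_isDiag_of_mem_edgeSet e.2),
    ← Nat.card_eq_finsetCard]
  exact Nat.card_congr (Equiv.subtypeEquivRight fun v => Sym2.mem_toFinset.symm)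

namespace edgeCorona

variable {V : Type} {G : SimpleGraph V} {q : ℕ}

def inlEmbedding : G ↪g edgeCorona G q where
  toFun := Sum.inl
  inj' := Sum.inl_injective
  map_rel_iff' := Iff.rfl

def cliqueEmbedding (e : G.edgeSet) (u : V) (hu : u ∈ (e : Sym2 V)) :
    (⊤ : SimpleGraph (Option (Fin q))) ↪g edgeCorona G q where
  toFun a := a.elim (.inl u) fun i => .inr (e, i)
  inj' := by rintro (_ | i) (_ | j) h <;> simp_all
  map_rel_iff' := by
    rintro (_ | i) (_ | j)
    · exact iff_of_false (G.loopless.irrefl u) (by simp)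
    · exact iff_of_true hu (by simp)
    · exact iff_of_true hu (by simp)
    · exact ⟨fun h => by simpa using h.2, fun h => ⟨rfl, by simpa using h⟩⟩

def neighborSetInlEquiv (u : V) :
    (edgeCorona G q).neighborSet (.inl u) ≃ G.neighborSet u ⊕ (G.incidenceSet u × Fin q) where
  toFun
    | ⟨.inl v, h⟩ => .inl ⟨v, h⟩
    | ⟨.inr (e, i), h⟩ => .inr (⟨e, e.2, h⟩, i)
  invFun
    | .inl ⟨v, h⟩ => ⟨.inl v, h⟩
    | .inr (⟨e, he, h⟩, i) => ⟨.inr (⟨e, he⟩, i), h⟩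
  left_inv := by rintro ⟨_ | _, _⟩ <;> rfl
  right_inv := by rintro (_ | ⟨⟨_, _, _⟩, _⟩) <;> rfl

def neighborSetInrEquiv (e : G.edgeSet) (i : Fin q) :
    (edgeCorona G q).neighborSet (.inr (e, i)) ≃
      {v // v ∈ (e : Sym2 V)} ⊕ {j // j ≠ i} where
  toFun
    | ⟨.inl v, h⟩ => .inl ⟨v, h⟩
    | ⟨.inr (_, j), h⟩ => .inr ⟨j, h.2.symm⟩
  invFun
    | .inl ⟨v, h⟩ => ⟨.inl v, h⟩
    | .inr ⟨j, hj⟩ => ⟨.inr (e, j), rfl, hj.symm⟩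
  left_inv := by
    rintro ⟨_ | ⟨f, j⟩, h⟩
    · rfl
    · obtain ⟨hef, _⟩ := h
      obtain rfl : e = f := hef
      rfl
  right_inv := by rintro (_ | _) <;> rfl

theorem card_edgeSet [Finite V] :
    2 * Nat.card (edgeCorona G q).edgeSet = Nat.card G.edgeSet * ((q + 1) * (q + 2)) := by
  classical
  have := Fintype.ofFinite V
  have hinl : ∀ u, Nat.card ((edgeCorona G q).neighborSet (.inl u)) =
      (q + 1) * Nat.card (G.neighborSet u) := fun u => by
    rw [Nat.card_congr (neighborSetInlEquiv u), Nat.card_sum, Nat.card_prod,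
      Nat.card_congr (G.incidenceSetEquivNeighborSet u), Nat.card_fin]
    ring
  have hinr : ∀ p : G.edgeSet × Fin q,
      Nat.card ((edgeCorona G q).neighborSet (.inr p)) = q + 1 := fun ⟨e, i⟩ => by
    rw [Nat.card_congr (neighborSetInrEquiv e i), Nat.card_sum, SimpleGraph.card_mem_edge,
      Nat.card_eq_fintype_card, Fintype.card_subtype_compl, Fintype.card_fin, Fintype.card_unique]
    have := i.pos
    omega
  rw [← SimpleGraph.sum_card_neighborSet, Fintype.sum_sum_type,
    Finset.sum_congr rfl fun u _ => hinl u, Finset.sum_congr rfl fun p _ => hinr p,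
    ← Finset.mul_sum,
    SimpleGraph.sum_card_neighborSet, Finset.sum_const, Finset.card_univ, Fintype.card_prod,
    Fintype.card_fin, smul_eq_mul, ← Nat.card_eq_fintype_card]
  ring

end edgeCorona

namespace AcyclicOrientation

open edgeCorona

variable {V : Type} {G : SimpleGraph V} {q : ℕ}

section Lift

variable (o : AcyclicOrientation G) (τ : G.edgeSet → Option (Fin q) ≃ Fin (q + 1))

/-- `τ e` ranks the tail of `e` (`none`) and the new vertices over `e` (`some i`); arcs among them
point down the ranking, and every new vertex points to the head of `e`. -/
def toEdgeCoronaDir : V ⊕ (G.edgeSet × Fin q) → V ⊕ (G.edgeSet × Fin q) → Prop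
  | .inl u, .inl v => o.dir u v
  | .inl u, .inr (e, i) => u = o.tail e ∧ τ e (some i) < τ e none
  | .inr (e, i), .inl v => v = o.head e ∨ (v = o.tail e ∧ τ e none < τ e (some i))
  | .inr (e, i), .inr (f, j) => e = f ∧ τ f (some j) < τ e (some i)

noncomputable def toEdgeCoronaHeight : V ⊕ (G.edgeSet × Fin q) → V × ℤ
  | .inl u => (u, 0)
  | .inr (e, i) => (o.tail e, (τ e (some i) : ℤ) - τ e none)

theorem toEdgeCoronaDir_lex_height : ∀ x y, o.toEdgeCoronaDir τ x y →
    Prod.Lex (TransGen o.dir) (· > ·) (o.toEdgeCoronaHeight τ x) (o.toEdgeCoronaHeight τ y)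
  | .inl _, .inl _, h => .left _ _ (.single h)
  | .inl _, .inr (e, i), ⟨hu, h⟩ => by
    subst hu
    exact .right _ (by simp only [Fin.lt_def] at h; omega)
  | .inr (e, _), .inl _, .inl hv => hv ▸ .left _ _ (.single (o.dir_tail_head e))
  | .inr (e, i), .inl _, .inr ⟨hv, h⟩ => by
    subst hv
    exact .right _ (by simp only [Fin.lt_def] at h; omega)
  | .inr (e, i), .inr (f, j), ⟨hef, h⟩ => by
    subst hef
    exact .right _ (by simp only [Fin.lt_def] at h; omega)

noncomputable def toEdgeCorona : AcyclicOrientation (edgeCorona G q) where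
  dir := o.toEdgeCoronaDir τ
  dir_adj
    | .inl _, .inl _, h => o.dir_adj _ _ h
    | .inl _, .inr (e, _), ⟨hu, _⟩ => hu ▸ o.tail_mem e
    | .inr (e, _), .inl _, .inl hv => hv ▸ o.head_mem e
    | .inr (e, _), .inl _, .inr ⟨hv, _⟩ => hv ▸ o.tail_mem e
    | .inr (e, _), .inr (f, _), ⟨hef, h⟩ => ⟨hef, by
      rintro rfl
      subst hef
      exact lt_irrefl _ h⟩
  adj_dir
    | .inl _, .inl _, h => o.adj_dir _ _ h
    | .inl _, .inr (e, i), h => by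
      have hne : τ e (some i) ≠ τ e none := (τ e).injective.ne (Option.some_ne_none i)
      rcases (o.mem_edge_iff e).1 h with rfl | rfl
      · exact (lt_or_gt_of_ne hne).imp (⟨rfl, ·⟩) (.inr ⟨rfl, ·⟩)
      · exact .inr (.inl rfl)
    | .inr (e, i), .inl _, h => by
      have hne : τ e (some i) ≠ τ e none := (τ e).injective.ne (Option.some_ne_none i)
      rcases (o.mem_edge_iff e).1 h with rfl | rfl
      · exact (lt_or_gt_of_ne hne).symm.imp (.inr ⟨rfl, ·⟩) (⟨rfl, ·⟩)
      · exact .inl (.inl rfl)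
    | .inr (e, i), .inr (f, j), ⟨hef, hij⟩ => by
      subst hef
      exact (lt_or_gt_of_ne ((τ e).injective.ne (Option.some_injective _ |>.ne hij))).symm.imp
        (⟨rfl, ·⟩) (⟨rfl, ·⟩)
  asymm
    | .inl _, .inl _, h => o.asymm _ _ h
    | .inl _, .inr (e, _), ⟨hu, h⟩ => fun h' =>
      h'.elim (fun hh => o.tail_ne_head e (hu ▸ hh)) (lt_asymm h ·.2)
    | .inr (e, _), .inl _, h => fun ⟨hu, h'⟩ =>
      h.elim (fun hh => o.tail_ne_head e (hu ▸ hh)) (lt_asymm h' ·.2)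
    | .inr (e, _), .inr (f, _), ⟨hef, h⟩ => fun ⟨_, h'⟩ => by subst hef; exact lt_asymm h h'
  acyclic := not_transGen_self_of_map (s := Prod.Lex (TransGen o.dir) (· > ·))
    (o.toEdgeCoronaHeight τ) (o.toEdgeCoronaDir_lex_height τ)

theorem toEdgeCorona_dir_inr_head (e : G.edgeSet) (i : Fin q) :
    (o.toEdgeCorona τ).dir (.inr (e, i)) (.inl (o.head e)) :=
  Or.inl rfl

theorem isRootConnected_toEdgeCorona {r : V} (ho : o.IsRootConnected r) :
    (o.toEdgeCorona τ).IsRootConnected (.inl r) := by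
  rw [isRootConnected_iff] at ho ⊢
  have hlift : ∀ v, ReflTransGen (o.toEdgeCorona τ).dir (.inl v) (.inl r) := fun v =>
    (ho v).lift Sum.inl fun _ _ => id
  rintro (v | ⟨e, i⟩)
  · exact hlift v
  · exact .head (o.toEdgeCorona_dir_inr_head τ e i) (hlift (o.head e))

theorem comap_inlEmbedding_toEdgeCorona : (o.toEdgeCorona τ).comap inlEmbedding = o :=
  ext_of_dir_imp fun _ _ => id

theorem comap_cliqueEmbedding_toEdgeCorona_dir (e : G.edgeSet) (a b : Option (Fin q)) :
    ((o.toEdgeCorona τ).comap (cliqueEmbedding e _ (o.tail_mem e))).dir a b ↔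
      τ e b < τ e a := by
  rcases a with _ | i <;> rcases b with _ | j
  · exact iff_of_false (fun h => o.asymm _ _ h h) (lt_irrefl _)
  · exact ⟨And.right, And.intro rfl⟩
  · exact ⟨fun h => (h.resolve_left (o.tail_ne_head e)).2, fun h => .inr ⟨rfl, h⟩⟩
  · exact ⟨And.right, And.intro rfl⟩

end Lift

theorem toEdgeCorona_inj {o o' : AcyclicOrientation G}
    {τ τ' : G.edgeSet → Option (Fin q) ≃ Fin (q + 1)} :
    o.toEdgeCorona τ = o'.toEdgeCorona τ' ↔ o = o' ∧ τ = τ' := by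
  refine ⟨fun h => ?_, fun ⟨ho, hτ⟩ => ho ▸ hτ ▸ rfl⟩
  obtain rfl : o = o' := by
    rw [← comap_inlEmbedding_toEdgeCorona o τ, ← comap_inlEmbedding_toEdgeCorona o' τ', h]
  refine ⟨rfl, funext fun e => Equiv.eq_of_lt_iff_lt fun a b => ?_⟩
  rw [← comap_cliqueEmbedding_toEdgeCorona_dir, ← comap_cliqueEmbedding_toEdgeCorona_dir, h]

section Restrict

variable (O : AcyclicOrientation (edgeCorona G q))

theorem exists_mem_edge_transGen_inr_inl {e : G.edgeSet} {i : Fin q} {y : V}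
    (h : TransGen O.dir (.inr (e, i)) (.inl y)) :
    ∃ b ∈ (e : Sym2 V), TransGen O.dir (.inr (e, i)) (.inl b) := by
  generalize hz : (Sum.inr (e, i) : V ⊕ (G.edgeSet × Fin q)) = z at h
  induction h using TransGen.head_induction_on generalizing i with
  | single hzy =>
    subst hz
    exact ⟨y, O.dir_adj _ _ hzy, .single hzy⟩
  | @head z w hzw _ ih =>
    subst hz
    rcases w with v | ⟨f, j⟩
    · exact ⟨v, O.dir_adj _ _ hzw, .single hzw⟩
    · obtain rfl : e = f := (O.dir_adj _ _ hzw).1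
      obtain ⟨b, hb, hwb⟩ := ih rfl
      exact ⟨b, hb, .head hzw hwb⟩

variable {O} {r : V} (hO : O.IsRootConnected (.inl r))
include hO

/-- A new vertex over `e` leaves its clique through the tail or the head of `e`; if the head
pointed to it, either exit would close a cycle. -/
theorem dir_inr_head_comap_inlEmbedding (e : G.edgeSet) (i : Fin q) :
    O.dir (.inr (e, i)) (.inl ((O.comap inlEmbedding).head e)) := by
  set o := O.comap inlEmbedding
  by_contra hne
  have hhead : O.dir (.inl (o.head e)) (.inr (e, i)) :=
    (O.adj_dir (.inr (e, i)) (.inl (o.head e)) (o.head_mem e)).resolve_left hne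
  obtain ⟨b, hb, hpath⟩ := O.exists_mem_edge_transGen_inr_inl (hO _ Sum.inr_ne_inl)
  rcases (o.mem_edge_iff e).1 hb with rfl | rfl
  · exact O.acyclic _ ((TransGen.head hhead hpath).tail (o.dir_tail_head e))
  · exact O.acyclic _ (.head hhead hpath)

theorem isRootConnected_comap_inlEmbedding : (O.comap inlEmbedding).IsRootConnected r := by
  set o := O.comap inlEmbedding
  -- collapsing each new vertex onto the tail of its edge turns paths of `O` into paths of `o`
  have hproj : ∀ x y, O.dir x y →
      ReflTransGen o.dir (x.elim id (o.tail ·.1)) (y.elim id (o.tail ·.1)) := by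
    rintro (u | ⟨e, i⟩) (v | ⟨f, j⟩) h
    · exact .single h
    · rcases (o.mem_edge_iff f).1 (O.dir_adj _ _ h) with rfl | rfl
      · exact .refl
      · exact absurd h (O.asymm _ _ (dir_inr_head_comap_inlEmbedding hO f j))
    · rcases (o.mem_edge_iff e).1 (O.dir_adj _ _ h) with rfl | rfl
      · exact .refl
      · exact .single (o.dir_tail_head e)
    · obtain rfl : e = f := (O.dir_adj _ _ h).1
      exact .refl
  rw [isRootConnected_iff] at hO ⊢
  exact fun v => ReflTransGen.lift' _ hproj _ _ (hO (.inl v))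

theorem exists_toEdgeCorona_eq :
    ∃ τ : G.edgeSet → Option (Fin q) ≃ Fin (q + 1),
      (O.comap inlEmbedding).toEdgeCorona τ = O := by
  set o := O.comap inlEmbedding
  choose τ hτ using fun e => (O.comap (cliqueEmbedding e _ (o.tail_mem e))).exists_rank
    (by simp : Fintype.card (Option (Fin q)) = q + 1)
  refine ⟨τ, ext_of_dir_imp ?_⟩
  rintro (u | ⟨e, i⟩) (v | ⟨f, j⟩) h
  · exact h
  · obtain ⟨rfl, h⟩ := h
    exact (hτ f none (some j)).2 h
  · rcases h with rfl | ⟨rfl, h⟩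
    · exact dir_inr_head_comap_inlEmbedding hO e i
    · exact (hτ e (some i) none).2 h
  · obtain ⟨rfl, h⟩ := h
    exact (hτ e (some i) (some j)).2 h

end Restrict

theorem card_isRootConnected_edgeCorona [Finite G.edgeSet] (r : V) :
    Nat.card {O : AcyclicOrientation (edgeCorona G q) // O.IsRootConnected (.inl r)} =
      Nat.card {o : AcyclicOrientation G // o.IsRootConnected r} *
        (q + 1)! ^ Nat.card G.edgeSet := by
  have hbij : Function.Bijective fun p : {o : AcyclicOrientation G // o.IsRootConnected r} ×
      (G.edgeSet → Option (Fin q) ≃ Fin (q + 1)) =>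
      (⟨p.1.1.toEdgeCorona p.2, p.1.1.isRootConnected_toEdgeCorona p.2 p.1.2⟩ :
        {O : AcyclicOrientation (edgeCorona G q) // O.IsRootConnected (.inl r)}) := by
    refine ⟨fun p p' h => ?_, fun ⟨O, hO⟩ => ?_⟩
    · obtain ⟨⟨o, ho⟩, τ⟩ := p
      obtain ⟨⟨o', ho'⟩, τ'⟩ := p'
      obtain ⟨rfl, rfl⟩ := toEdgeCorona_inj.1 (congrArg Subtype.val h)
      rfl
    · obtain ⟨τ, hτ⟩ := exists_toEdgeCorona_eq hO
      exact ⟨(⟨_, isRootConnected_comap_inlEmbedding hO⟩, τ), Subtype.ext hτ⟩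
  have hτ : Nat.card (Option (Fin q) ≃ Fin (q + 1)) = (q + 1)! := by
    rw [Nat.card_eq_fintype_card, Fintype.card_equiv (finSuccEquiv q).symm]
    simp
  rw [← Nat.card_eq_of_bijective _ hbij, Nat.card_prod, Nat.card_fun, hτ]

end AcyclicOrientation

instance GVert.finite (q : ℕ) : ∀ g, Finite (GVert q g)
  | 0 => inferInstanceAs (Finite (Fin (q + 2)))
  | g + 1 =>
    have := GVert.finite q g
    inferInstanceAs (Finite (GVert q g ⊕ ((Gnet q g).edgeSet × Fin q)))

theorem two_mul_succ_mul_add_two_div_two (q : ℕ) :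
    2 * ((q + 1) * (q + 2) / 2) = (q + 1) * (q + 2) :=
  Nat.two_mul_div_two_of_even (Nat.even_mul_succ_self (q + 1))

theorem card_edgeSet_Gnet (q : ℕ) :
    ∀ g, Nat.card (Gnet q g).edgeSet = ((q + 1) * (q + 2) / 2) ^ (g + 1)
  | 0 => by
    classical
    show Nat.card (⊤ : SimpleGraph (Fin (q + 2))).edgeSet = _
    rw [Nat.card_eq_fintype_card, ← SimpleGraph.edgeFinset_card,
      SimpleGraph.card_edgeFinset_top_eq_card_choose_two, Fintype.card_fin, Nat.choose_two_right,
      pow_one, show q + 2 - 1 = q + 1 from rfl, Nat.mul_comm]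
  | g + 1 => by
    have h := edgeCorona.card_edgeSet (G := Gnet q g) (q := q)
    have hm := two_mul_succ_mul_add_two_div_two q
    rw [card_edgeSet_Gnet q g] at h
    generalize (q + 1) * (q + 2) / 2 = m at h hm ⊢
    rw [← hm] at h
    exact Nat.eq_of_mul_eq_mul_left two_pos (h.trans (by ring))

theorem card_isRootConnected_Gnet (q g : ℕ) :
    Nat.card {o : AcyclicOrientation (Gnet q g) // o.IsRootConnected (hub q g 0)} =
      (q + 1)! ^ ∑ k ∈ Finset.range (g + 1), ((q + 1) * (q + 2) / 2) ^ k := by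
  induction g with
  | zero =>
    rw [Finset.sum_range_one, pow_zero, pow_one]
    exact AcyclicOrientation.card_isRootConnected_top (0 : Fin (q + 2)) (Fintype.card_fin _)
  | succ g ih =>
    rw [Finset.sum_range_succ, pow_add, ← ih, ← card_edgeSet_Gnet]
    exact AcyclicOrientation.card_isRootConnected_edgeCorona (G := Gnet q g) (hub q g 0)

theorem expE_eq_sum_range {q : ℕ} (hq : 1 ≤ q) (g : ℕ) :
    expE q g = ∑ k ∈ Finset.range (g + 1), ((q + 1) * (q + 2) / 2) ^ k := by
  have hm := two_mul_succ_mul_add_two_div_two q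
  have hdenom : q * (q + 3) = 2 * ((q + 1) * (q + 2) / 2 - 1) := by
    rw [Nat.mul_sub, hm]
    ring_nf
    omega
  rw [Nat.geomSum_eq (by nlinarith), expE, hdenom, Nat.mul_div_mul_left _ _ two_pos]

/-- For all `g ≥ 0`, `q ≥ 1`, the number of acyclic orientations of `G_q(g)`
that are root-connected (the fixed root, a hub vertex, is reachable by a
directed path from every other vertex) is `((q+1)!)^{E(g,q)}`. -/
theorem card_rootConnected_acyclicOrientations (q g : ℕ) (hq : 1 ≤ q) :
    Nat.card {o : AcyclicOrientation (Gnet q g) //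
        ∀ v : GVert q g, v ≠ hub q g 0 → Relation.TransGen o.dir v (hub q g 0)} =
      Nat.factorial (q + 1) ^ expE q g := by
  rw [expE_eq_sum_range hq]
  exact card_isRootConnected_Gnet q g
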